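/- arXiv:2507.12339 — 8 statements merged into one kernel-verified Lean document; each statement's English description precedes it below -/
import Mathlib

section
/- Let T be a topological space, ι a finite index type, and P : ι → Set T a family of subsets whose union is all of T. Then for every subset K ⊆ T, K is contained in the interior of the union ⋃_{i ∈ A} P i, where A = {i : closure (P i) ∩ K ≠ ∅} is the set of indices whose cell closure meets K. -/
open Set

theorem compl_biUnion_closure_subset_biUnion {T ι : Type*} [TopologicalSpace T]
    {P : ι → Set T} (hcover : (⋃ i, P i) = univ) (s : Set ι) :
    (⋃ i ∈ sᶜ, closure (P i))ᶜ ⊆ ⋃ i ∈ s, P i := by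
  intro x hx
  obtain ⟨i, hxi⟩ := mem_iUnion.mp (hcover ▸ mem_univ x)
  by_cases hi : i ∈ s
  · exact mem_biUnion hi hxi
  · exact absurd (mem_biUnion (show i ∈ sᶜ from hi) (subset_closure hxi)) hx

theorem compl_biUnion_closure_subset_interior_biUnion {T ι : Type*} [TopologicalSpace T]
    [Finite ι] {P : ι → Set T} (hcover : (⋃ i, P i) = univ) (s : Set ι) :
    (⋃ i ∈ sᶜ, closure (P i))ᶜ ⊆ interior (⋃ i ∈ s, P i) :=
  interior_maximal (compl_biUnion_closure_subset_biUnion hcover s)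
    ((toFinite _).isClosed_biUnion fun _ _ => isClosed_closure).isOpen_compl

/-- Abstract topological core of Lemma 3.1: for a finite cover `P` of `T`, any set `K`
is contained in the interior of the union of the cells whose closures meet `K`. -/
theorem subset_interior_iUnion_of_closure_inter
    {T : Type*} [TopologicalSpace T] {ι : Type*} [Finite ι]
    (P : ι → Set T) (hcover : (⋃ i, P i) = Set.univ) (K : Set T) :
    K ⊆ interior (⋃ i ∈ {i : ι | (closure (P i) ∩ K).Nonempty}, P i) := by
  refine Subset.trans ?_ (compl_biUnion_closure_subset_interior_biUnion hcover _)
  intro x hxK hx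
  obtain ⟨i, hi, hxi⟩ := mem_iUnion₂.mp hx
  exact hi ⟨x, hxi, hxK⟩
end

section
/- (Lemma 3.1.) For every cell index i and input u, the closure of the over-approximated reachable set Fbar i u is contained in the interior of the concretization of its symbolic successor set: closure (Fbar i u) ⊆ interior (Q⁻¹(Δd(i,u))). -/
open Metric Set Pointwise

/-- The symbolic successor set `Δd(i,u)`: indices `j` whose cell closure meets the
closure of the over-approximated reachable set. -/
def symbSucc {E ι Ud : Type*} [TopologicalSpace E]
    (P : ι → Set E) (Fbar : ι → Ud → Set E) (i : ι) (u : Ud) : Set ι :=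
  {j | (closure (Fbar i u) ∩ closure (P j)).Nonempty}

/-- Concretization `Q⁻¹(A) = ⋃_{j ∈ A} P j`. -/
def conc {E ι : Type*} (P : ι → Set E) (A : Set ι) : Set E :=
  ⋃ j ∈ A, P j

/-- The admissible-margin set `S = {ε : 0 ≤ ε ∧ K + closedBall 0 ε ⊆ interior V}`. -/
def marginSet {E : Type*} [SeminormedAddCommGroup E] (K V : Set E) : Set ℝ :=
  {ε : ℝ | 0 ≤ ε ∧ K + closedBall (0 : E) ε ⊆ interior V}

/-- The robustness margin `η(i,u) = sSup S(i,u)`. -/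
noncomputable def eta {E ι Ud : Type*} [SeminormedAddCommGroup E]
    (P : ι → Set E) (Fbar : ι → Ud → Set E) (i : ι) (u : Ud) : ℝ :=
  sSup (marginSet (closure (Fbar i u)) (conc P (symbSucc P Fbar i u)))

/-!
Let `K` be the closure of `Fbar i u` and `S = Δd(i,u)`. The cells outside `S` have closures disjoint
from `K`, and since there are finitely many of them, the closure of their union is the union of their
closures, hence still disjoint from `K`. Its complement is an open neighbourhood of `K`, and because
the cells cover the space it lies inside the union of the cells in `S`.
-/

section

variable {X ι : Type*} {P : ι → Set X}

theorem compl_biUnion_compl_subset_biUnion (hcover : ⋃ j, P j = univ) (S : Set ι) :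
    (⋃ j ∈ Sᶜ, P j)ᶜ ⊆ ⋃ j ∈ S, P j := by
  intro x hx
  obtain ⟨j, hj⟩ := mem_iUnion.mp (hcover ▸ mem_univ x : x ∈ ⋃ j, P j)
  have hjS : j ∈ S := by_contra fun hjS => hx (mem_biUnion hjS hj)
  exact mem_biUnion hjS hj

variable [TopologicalSpace X]

theorem LocallyFinite.closure_biUnion (hP : LocallyFinite P) (S : Set ι) :
    closure (⋃ j ∈ S, P j) = ⋃ j ∈ S, closure (P j) := by
  rw [biUnion_eq_iUnion, biUnion_eq_iUnion]
  exact (hP.comp_injective Subtype.val_injective).closure_iUnion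

theorem LocallyFinite.subset_interior_biUnion_of_closure_inter_nonempty
    (hP : LocallyFinite P) (hcover : ⋃ j, P j = univ) (K : Set X) :
    K ⊆ interior (⋃ j ∈ {j | (K ∩ closure (P j)).Nonempty}, P j) := by
  set S := {j | (K ∩ closure (P j)).Nonempty}
  have hdisj : Disjoint K (closure (⋃ j ∈ Sᶜ, P j)) := by
    rw [hP.closure_biUnion, disjoint_iUnion₂_right]
    exact fun j hj => disjoint_iff_inter_eq_empty.mpr (not_nonempty_iff_eq_empty.mp hj)
  calc K ⊆ (closure (⋃ j ∈ Sᶜ, P j))ᶜ := hdisj.subset_compl_right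
    _ = interior (⋃ j ∈ Sᶜ, P j)ᶜ := interior_compl.symm
    _ ⊆ interior (⋃ j ∈ S, P j) := interior_mono (compl_biUnion_compl_subset_biUnion hcover S)

end

theorem closure_Fbar_subset_interior_conc_symbSucc_general
    {n : ℕ} {ι Ud : Type*} [Fintype ι]
    (P : ι → Set (EuclideanSpace ℝ (Fin n)))
    (hcover : (⋃ i, P i) = Set.univ)
    (Fbar : ι → Ud → Set (EuclideanSpace ℝ (Fin n)))
    (i : ι) (u : Ud) :
    closure (Fbar i u) ⊆ interior (conc P (symbSucc P Fbar i u)) :=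
  (locallyFinite_of_finite P).subset_interior_biUnion_of_closure_inter_nonempty hcover _

/-- Lemma 3.1: the closure of the over-approximated reachable set is contained in the
interior of the concretization of its symbolic successor set. -/
theorem closure_Fbar_subset_interior_conc_symbSucc
    {n q : ℕ} {ι Ud : Type*} [Fintype ι]
    (P : ι → Set (EuclideanSpace ℝ (Fin n)))
    (hdisj : Pairwise (Function.onFun Disjoint P))
    (hcover : (⋃ i, P i) = Set.univ)
    (Q : EuclideanSpace ℝ (Fin n) → ι) (hQ : ∀ x, x ∈ P (Q x))
    (D : Set (EuclideanSpace ℝ (Fin q)))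
    (f : EuclideanSpace ℝ (Fin n) → Ud → EuclideanSpace ℝ (Fin q) → EuclideanSpace ℝ (Fin n))
    (Fbar : ι → Ud → Set (EuclideanSpace ℝ (Fin n)))
    (hFbar : ∀ i u x d, x ∈ P i → d ∈ D → f x u d ∈ Fbar i u)
    (i : ι) (u : Ud) :
    closure (Fbar i u) ⊆ interior (conc P (symbSucc P Fbar i u)) :=
  closure_Fbar_subset_interior_conc_symbSucc_general P hcover Fbar i u
end

section
/- (Theorem 3.2, first item.) Fix a cell index i and input u, and assume the set Fbar i u is bounded. Then there exists ε > 0 such that closure (Fbar i u) + closedBall 0 ε ⊆ interior (Q⁻¹(Δd(i,u))). Consequently, if in addition the admissible-margin set S(i,u) is bounded above, the robustness margin η(i,u) = sSup S(i,u) is strictly positive. -/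
open Metric Set Pointwise

/-!
Removing from space the closures of the finitely many cells that miss `K` leaves an open set
containing `K`, and every point of it lies in a cell that meets `K`; so `K` sits inside the
interior of the concretization of its successors. When `K` is compact, some closed
`ε`-thickening `K + closedBall 0 ε` of it still fits inside that open set.
-/

theorem subset_interior_conc_of_iUnion_eq_univ {E ι : Type*} [TopologicalSpace E] [Finite ι]
    {P : ι → Set E} (hcover : ⋃ j, P j = univ) (K : Set E) :
    K ⊆ interior (conc P {j | (K ∩ closure (P j)).Nonempty}) := by
  set U := (⋃ j ∈ {j | (K ∩ closure (P j)).Nonempty}ᶜ, closure (P j))ᶜ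
  have hU : IsOpen U :=
    ((toFinite _).isClosed_biUnion fun j _ => isClosed_closure).isOpen_compl
  have hKU : K ⊆ U := by
    simp only [U, subset_compl_iff_disjoint_right, disjoint_iUnion_right]
    intro j hj
    exact disjoint_iff_inter_eq_empty.2 (not_nonempty_iff_eq_empty.1 hj)
  have hUV : U ⊆ conc P {j | (K ∩ closure (P j)).Nonempty} := by
    intro x hxU
    obtain ⟨j, hxj⟩ := mem_iUnion.1 (hcover ▸ mem_univ x)
    refine mem_biUnion (by_contra fun hj => hxU ?_) hxj
    exact mem_biUnion hj (subset_closure hxj)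
  exact hKU.trans (interior_maximal hUV hU)

theorem exists_pos_mem_marginSet {E : Type*} [SeminormedAddCommGroup E] {K V : Set E}
    (hK : IsCompact K) (hKV : K ⊆ interior V) : ∃ ε > 0, ε ∈ marginSet K V := by
  obtain ⟨ε, hε, hεV⟩ := hK.exists_cthickening_subset_open isOpen_interior hKV
  exact ⟨ε, hε, hε.le, (hK.add_closedBall_zero hε.le).trans_subset hεV⟩

theorem exists_pos_margin_and_eta_pos_general
    {n : ℕ} {ι Ud : Type*} [Fintype ι]
    (P : ι → Set (EuclideanSpace ℝ (Fin n)))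
    (hcover : (⋃ i, P i) = Set.univ)
    (Fbar : ι → Ud → Set (EuclideanSpace ℝ (Fin n)))
    (i : ι) (u : Ud)
    (hbdd : Bornology.IsBounded (Fbar i u)) :
    (∃ ε > (0 : ℝ), closure (Fbar i u) + closedBall (0 : EuclideanSpace ℝ (Fin n)) ε ⊆
        interior (conc P (symbSucc P Fbar i u))) ∧
    (BddAbove (marginSet (closure (Fbar i u)) (conc P (symbSucc P Fbar i u))) →
        0 < eta P Fbar i u) := by
  obtain ⟨ε, hε, hεS⟩ := exists_pos_mem_marginSet hbdd.isCompact_closure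
    (subset_interior_conc_of_iUnion_eq_univ hcover (closure (Fbar i u)))
  exact ⟨⟨ε, hε, hεS.2⟩, fun hS => hε.trans_le (le_csSup hS hεS)⟩

/-- Theorem 3.2, first item: if `Fbar i u` is bounded then some strictly positive
margin is admissible; consequently the robustness margin `η(i,u)` is positive
whenever the admissible-margin set is bounded above. -/
theorem exists_pos_margin_and_eta_pos
    {n q : ℕ} {ι Ud : Type*} [Fintype ι]
    (P : ι → Set (EuclideanSpace ℝ (Fin n)))
    (hdisj : Pairwise (Function.onFun Disjoint P))
    (hcover : (⋃ i, P i) = Set.univ)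
    (Q : EuclideanSpace ℝ (Fin n) → ι) (hQ : ∀ x, x ∈ P (Q x))
    (D : Set (EuclideanSpace ℝ (Fin q)))
    (f : EuclideanSpace ℝ (Fin n) → Ud → EuclideanSpace ℝ (Fin q) → EuclideanSpace ℝ (Fin n))
    (Fbar : ι → Ud → Set (EuclideanSpace ℝ (Fin n)))
    (hFbar : ∀ i u x d, x ∈ P i → d ∈ D → f x u d ∈ Fbar i u)
    (i : ι) (u : Ud)
    (hbdd : Bornology.IsBounded (Fbar i u)) :
    (∃ ε > (0 : ℝ), closure (Fbar i u) + closedBall (0 : EuclideanSpace ℝ (Fin n)) ε ⊆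
        interior (conc P (symbSucc P Fbar i u))) ∧
    (BddAbove (marginSet (closure (Fbar i u)) (conc P (symbSucc P Fbar i u))) →
        0 < eta P Fbar i u) :=
  exists_pos_margin_and_eta_pos_general P hcover Fbar i u hbdd
end

section
/- (Theorem 3.2, second item — alternating simulation.) Let X⁰ ⊆ E be a set of initial states and I₀ ⊆ ι a set of initial cell indices such that for every i ∈ I₀, P i is nonempty and P i ⊆ X⁰. Let μ : E → Ud → ℝ be a perturbation-bound map such that for every x ∈ E and input u, 0 ≤ μ x u and there exists ε with μ x u < ε and closure (Fbar (Q x) u) + closedBall 0 ε ⊆ interior (Q⁻¹(Δd(Q x, u))). Then the relation R = {(x,i) : x ∈ P i} ⊆ E × ι satisfies both alternating-simulation conditions from the symbolic model to the μ-perturbed system: (i) for every i ∈ I₀ there exists x ∈ X⁰ with (x,i) ∈ R; and (ii) for all (x,i) ∈ R, every input u, every d ∈ D, and every y ∈ E with ‖y − f x u d‖ ≤ μ x u, there exists j ∈ Δd(i,u) with y ∈ P j (so (y,j) ∈ R). -/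
open Metric Set Pointwise

theorem mem_conc {E ι : Type*} {P : ι → Set E} {A : Set ι} {x : E} :
    x ∈ conc P A ↔ ∃ j ∈ A, x ∈ P j := by
  simp only [conc, mem_iUnion₂, exists_prop]

theorem mem_add_closedBall_zero_of_norm_sub_le {E : Type*} [SeminormedAddCommGroup E]
    {K : Set E} {a y : E} {ε : ℝ} (ha : a ∈ K) (hy : ‖y - a‖ ≤ ε) :
    y ∈ K + closedBall (0 : E) ε := by
  simpa using add_mem_add ha (mem_closedBall_zero_iff.2 hy)

theorem alternating_simulation_perturbed_general
    {n q : ℕ} {ι Ud : Type*}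
    (P : ι → Set (EuclideanSpace ℝ (Fin n)))
    (hdisj : Pairwise (Function.onFun Disjoint P))
    (Q : EuclideanSpace ℝ (Fin n) → ι) (hQ : ∀ x, x ∈ P (Q x))
    (D : Set (EuclideanSpace ℝ (Fin q)))
    (f : EuclideanSpace ℝ (Fin n) → Ud → EuclideanSpace ℝ (Fin q) → EuclideanSpace ℝ (Fin n))
    (Fbar : ι → Ud → Set (EuclideanSpace ℝ (Fin n)))
    (hFbar : ∀ i u x d, x ∈ P i → d ∈ D → f x u d ∈ Fbar i u)
    (X0 : Set (EuclideanSpace ℝ (Fin n))) (I0 : Set ι)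
    (hI0 : ∀ i ∈ I0, (P i).Nonempty ∧ P i ⊆ X0)
    (μ : EuclideanSpace ℝ (Fin n) → Ud → ℝ)
    (hμ : ∀ x u, 0 ≤ μ x u ∧ ∃ ε : ℝ, μ x u < ε ∧
      closure (Fbar (Q x) u) + closedBall (0 : EuclideanSpace ℝ (Fin n)) ε ⊆
        interior (conc P (symbSucc P Fbar (Q x) u))) :
    (∀ i ∈ I0, ∃ x ∈ X0, x ∈ P i) ∧
    (∀ x i, x ∈ P i → ∀ u : Ud, ∀ d ∈ D, ∀ y : EuclideanSpace ℝ (Fin n),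
      ‖y - f x u d‖ ≤ μ x u → ∃ j ∈ symbSucc P Fbar i u, y ∈ P j) := by
  refine ⟨fun i hi => ?_, fun x i hxi u d hd y hy => ?_⟩
  · obtain ⟨⟨x, hx⟩, hsub⟩ := hI0 i hi
    exact ⟨x, hsub hx, hx⟩
  · obtain rfl : i = Q x := hdisj.eq (not_disjoint_iff.2 ⟨x, hxi, hQ x⟩)
    obtain ⟨-, ε, hμε, hsub⟩ := hμ x u
    have hyF : y ∈ closure (Fbar (Q x) u) + closedBall 0 ε :=
      mem_add_closedBall_zero_of_norm_sub_le (subset_closure (hFbar _ u x d hxi hd))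
        (hy.trans hμε.le)
    exact mem_conc.1 (interior_subset (hsub hyF))

/-- Theorem 3.2, second item: the relation `R = {(x,i) : x ∈ P i}` is an alternating
simulation relation from the symbolic model to the μ-perturbed system. -/
theorem alternating_simulation_perturbed
    {n q : ℕ} {ι Ud : Type*} [Fintype ι]
    (P : ι → Set (EuclideanSpace ℝ (Fin n)))
    (hdisj : Pairwise (Function.onFun Disjoint P))
    (hcover : (⋃ i, P i) = Set.univ)
    (Q : EuclideanSpace ℝ (Fin n) → ι) (hQ : ∀ x, x ∈ P (Q x))
    (D : Set (EuclideanSpace ℝ (Fin q)))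
    (f : EuclideanSpace ℝ (Fin n) → Ud → EuclideanSpace ℝ (Fin q) → EuclideanSpace ℝ (Fin n))
    (Fbar : ι → Ud → Set (EuclideanSpace ℝ (Fin n)))
    (hFbar : ∀ i u x d, x ∈ P i → d ∈ D → f x u d ∈ Fbar i u)
    (X0 : Set (EuclideanSpace ℝ (Fin n))) (I0 : Set ι)
    (hI0 : ∀ i ∈ I0, (P i).Nonempty ∧ P i ⊆ X0)
    (μ : EuclideanSpace ℝ (Fin n) → Ud → ℝ)
    (hμ : ∀ x u, 0 ≤ μ x u ∧ ∃ ε : ℝ, μ x u < ε ∧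
      closure (Fbar (Q x) u) + closedBall (0 : EuclideanSpace ℝ (Fin n)) ε ⊆
        interior (conc P (symbSucc P Fbar (Q x) u))) :
    (∀ i ∈ I0, ∃ x ∈ X0, x ∈ P i) ∧
    (∀ x i, x ∈ P i → ∀ u : Ud, ∀ d ∈ D, ∀ y : EuclideanSpace ℝ (Fin n),
      ‖y - f x u d‖ ≤ μ x u → ∃ j ∈ symbSucc P Fbar i u, y ∈ P j) :=
  alternating_simulation_perturbed_general P hdisj Q hQ D f Fbar hFbar X0 I0 hI0 μ hμ
end

section
/- (Theorem 3.2, third item — tightness of the margin.) Fix a cell index i with P i nonempty, an input u, and assume D is nonempty. Assume Fbar i u is closed and is a δ-over-approximation of the true reachable set, i.e. Fbar i u ⊆ {f x u d : x ∈ P i, d ∈ D} + closedBall 0 δ for some δ ≥ 0. Assume the admissible-margin set S(i,u) is nonempty and bounded above, and let c be any real with c > η(i,u) + δ where η(i,u) = sSup S(i,u). Then there exist x ∈ P i, d ∈ D, and y ∈ E with ‖y − f x u d‖ ≤ c and y ∉ Q⁻¹(Δd(i,u)); in other words, enlarging the perturbation beyond η(i,u) + δ produces a successor of the perturbed system that lies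 in no symbolic successor cell, so the relation R = {(x,i) : x ∈ P i} fails to be an alternating simulation relation. -/
open Metric Set Pointwise

/-- A margin `ε` strictly between the supremum and `r` is not admissible, so some point of
`K + closedBall 0 ε` lies in the closure of `Vᶜ`. -/
theorem exists_norm_sub_lt_of_sSup_marginSet_lt {E : Type*} [SeminormedAddCommGroup E]
    {K V : Set E} (hbdd : BddAbove (marginSet K V)) {r : ℝ} (hr : sSup (marginSet K V) < r) :
    ∃ z ∈ K, ∃ y ∉ V, ‖y - z‖ < r := by
  obtain ⟨ε, hSε, hεr⟩ := exists_between hr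
  have hε : 0 ≤ ε := (Real.sSup_nonneg fun _ h => h.1).trans hSε.le
  have hnot : ¬ K + closedBall (0 : E) ε ⊆ interior V :=
    fun h => notMem_of_csSup_lt hSε hbdd ⟨hε, h⟩
  obtain ⟨_, ⟨z, hz, b, hb, rfl⟩, hzb⟩ := not_subset.mp hnot
  rw [← mem_compl_iff, ← closure_compl] at hzb
  obtain ⟨y, hy, hdist⟩ := Metric.mem_closure_iff.mp hzb (r - ε) (sub_pos.mpr hεr)
  refine ⟨z, hz, y, hy, ?_⟩
  calc ‖y - z‖ ≤ ‖y - (z + b)‖ + ‖z + b - z‖ := norm_sub_le_norm_sub_add_norm_sub ..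
    _ < (r - ε) + ε := by
        rw [add_sub_cancel_left, ← dist_eq_norm, dist_comm]
        exact add_lt_add_of_lt_of_le hdist (mem_closedBall_zero_iff.mp hb)
    _ = r := sub_add_cancel r ε

theorem margin_tightness_general
    {n q : ℕ} {ι Ud : Type*}
    (P : ι → Set (EuclideanSpace ℝ (Fin n)))
    (D : Set (EuclideanSpace ℝ (Fin q)))
    (f : EuclideanSpace ℝ (Fin n) → Ud → EuclideanSpace ℝ (Fin q) → EuclideanSpace ℝ (Fin n))
    (Fbar : ι → Ud → Set (EuclideanSpace ℝ (Fin n)))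
    (i : ι) (u : Ud)
    (δ : ℝ)
    (hclosed : IsClosed (Fbar i u))
    (hover : Fbar i u ⊆
      {y : EuclideanSpace ℝ (Fin n) | ∃ x ∈ P i, ∃ d ∈ D, f x u d = y} +
        closedBall (0 : EuclideanSpace ℝ (Fin n)) δ)
    (hSbdd : BddAbove (marginSet (closure (Fbar i u)) (conc P (symbSucc P Fbar i u))))
    (c : ℝ) (hc : eta P Fbar i u + δ < c) :
    ∃ x ∈ P i, ∃ d ∈ D, ∃ y : EuclideanSpace ℝ (Fin n),
      ‖y - f x u d‖ ≤ c ∧ y ∉ conc P (symbSucc P Fbar i u) := by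
  obtain ⟨z, hz, y, hy, hyz⟩ :=
    exists_norm_sub_lt_of_sSup_marginSet_lt hSbdd (lt_sub_iff_add_lt.mpr hc)
  rw [hclosed.closure_eq] at hz
  obtain ⟨_, ⟨x, hx, d, hd, rfl⟩, b, hb, rfl⟩ := hover hz
  refine ⟨x, hx, d, hd, y, ?_, hy⟩
  calc ‖y - f x u d‖ ≤ ‖y - (f x u d + b)‖ + ‖f x u d + b - f x u d‖ :=
        norm_sub_le_norm_sub_add_norm_sub ..
    _ ≤ (c - δ) + δ := by
        rw [add_sub_cancel_left]
        exact add_le_add hyz.le (mem_closedBall_zero_iff.mp hb)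
    _ = c := sub_add_cancel c δ

/-- Theorem 3.2, third item (tightness): beyond `η(i,u) + δ` the perturbed system has
a successor lying in no symbolic successor cell. -/
theorem margin_tightness
    {n q : ℕ} {ι Ud : Type*} [Fintype ι]
    (P : ι → Set (EuclideanSpace ℝ (Fin n)))
    (hdisj : Pairwise (Function.onFun Disjoint P))
    (hcover : (⋃ i, P i) = Set.univ)
    (Q : EuclideanSpace ℝ (Fin n) → ι) (hQ : ∀ x, x ∈ P (Q x))
    (D : Set (EuclideanSpace ℝ (Fin q)))
    (f : EuclideanSpace ℝ (Fin n) → Ud → EuclideanSpace ℝ (Fin q) → EuclideanSpace ℝ (Fin n))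
    (Fbar : ι → Ud → Set (EuclideanSpace ℝ (Fin n)))
    (hFbar : ∀ i u x d, x ∈ P i → d ∈ D → f x u d ∈ Fbar i u)
    (i : ι) (hPi : (P i).Nonempty) (u : Ud) (hD : D.Nonempty)
    (δ : ℝ) (hδ : 0 ≤ δ)
    (hclosed : IsClosed (Fbar i u))
    (hover : Fbar i u ⊆
      {y : EuclideanSpace ℝ (Fin n) | ∃ x ∈ P i, ∃ d ∈ D, f x u d = y} +
        closedBall (0 : EuclideanSpace ℝ (Fin n)) δ)
    (hS : (marginSet (closure (Fbar i u)) (conc P (symbSucc P Fbar i u))).Nonempty)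
    (hSbdd : BddAbove (marginSet (closure (Fbar i u)) (conc P (symbSucc P Fbar i u))))
    (c : ℝ) (hc : eta P Fbar i u + δ < c) :
    ∃ x ∈ P i, ∃ d ∈ D, ∃ y : EuclideanSpace ℝ (Fin n),
      ‖y - f x u d‖ ≤ c ∧ y ∉ conc P (symbSucc P Fbar i u) :=
  margin_tightness_general P D f Fbar i u δ hclosed hover hSbdd c hc
end

section
/- (Proposition 3.4, trajectory lifting.) Let Cd : ι → Set Ud be a symbolic controller and μ : E → Ud → ℝ a perturbation bound such that for every x ∈ E and input u, 0 ≤ μ x u and there exists ε with μ x u < ε and closure (Fbar (Q x) u) + closedBall 0 ε ⊆ interior (Q⁻¹(Δd(Q x, u))). Let x : ℕ → E and u : ℕ → Ud be sequences such that for every k ∈ ℕ: u k ∈ Cd (Q (x k)), and there exists d ∈ D with ‖x (k+1) − f (x k) (u k) d‖ ≤ μ (x k) (u k). Then for every k ∈ ℕ, Q (x (k+1)) ∈ Δd(Q (x k), u k); that is, the quantized sequence (Q (x k), u k) is a behavior of the symbolic model controlled by Cd. -/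
open Metric Set Pointwise

theorem closedBall_subset_add_closedBall_zero {E : Type*} [SeminormedAddCommGroup E]
    {s : Set E} {y : E} (hy : y ∈ s) (r : ℝ) :
    closedBall y r ⊆ s + closedBall (0 : E) r := by
  rw [← singleton_add_closedBall_zero]
  exact add_subset_add_right (singleton_subset_iff.mpr hy)

theorem mem_of_mem_conc {E ι : Type*} {P : ι → Set E}
    (hdisj : Pairwise (Function.onFun Disjoint P))
    {Q : E → ι} (hQ : ∀ x, x ∈ P (Q x)) {A : Set ι} {x : E} (hx : x ∈ conc P A) : Q x ∈ A := by
  obtain ⟨j, hj, hxj⟩ := mem_iUnion₂.mp hx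
  obtain rfl : j = Q x := hdisj.eq (not_disjoint_iff.mpr ⟨x, hxj, hQ x⟩)
  exact hj

theorem mem_symbSucc_of_dist_le {E ι Ud : Type*} [SeminormedAddCommGroup E]
    {P : ι → Set E} (hdisj : Pairwise (Function.onFun Disjoint P))
    {Q : E → ι} (hQ : ∀ x, x ∈ P (Q x)) {Fbar : ι → Ud → Set E} {i : ι} {u : Ud} {ε : ℝ}
    (hε : closure (Fbar i u) + closedBall (0 : E) ε ⊆ interior (conc P (symbSucc P Fbar i u)))
    {y z : E} (hy : y ∈ Fbar i u) (hzy : dist z y ≤ ε) : Q z ∈ symbSucc P Fbar i u :=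
  mem_of_mem_conc hdisj hQ <| interior_subset <| hε <|
    closedBall_subset_add_closedBall_zero (subset_closure hy) ε hzy

theorem trajectory_lifting_general
    {n q : ℕ} {ι Ud : Type*}
    (P : ι → Set (EuclideanSpace ℝ (Fin n)))
    (hdisj : Pairwise (Function.onFun Disjoint P))
    (Q : EuclideanSpace ℝ (Fin n) → ι) (hQ : ∀ x, x ∈ P (Q x))
    (D : Set (EuclideanSpace ℝ (Fin q)))
    (f : EuclideanSpace ℝ (Fin n) → Ud → EuclideanSpace ℝ (Fin q) → EuclideanSpace ℝ (Fin n))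
    (Fbar : ι → Ud → Set (EuclideanSpace ℝ (Fin n)))
    (hFbar : ∀ i u x d, x ∈ P i → d ∈ D → f x u d ∈ Fbar i u)
    (μ : EuclideanSpace ℝ (Fin n) → Ud → ℝ)
    (hμ : ∀ x u, 0 ≤ μ x u ∧ ∃ ε : ℝ, μ x u < ε ∧
      closure (Fbar (Q x) u) + closedBall (0 : EuclideanSpace ℝ (Fin n)) ε ⊆
        interior (conc P (symbSucc P Fbar (Q x) u)))
    (x : ℕ → EuclideanSpace ℝ (Fin n)) (u : ℕ → Ud)
    (hx : ∀ k, ∃ d ∈ D, ‖x (k + 1) - f (x k) (u k) d‖ ≤ μ (x k) (u k)) :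
    ∀ k, Q (x (k + 1)) ∈ symbSucc P Fbar (Q (x k)) (u k) := by
  intro k
  obtain ⟨d, hd, hdist⟩ := hx k
  obtain ⟨-, ε, hμε, hε⟩ := hμ (x k) (u k)
  rw [← dist_eq_norm] at hdist
  exact mem_symbSucc_of_dist_le hdisj hQ hε (hFbar _ _ _ _ (hQ (x k)) hd) (hdist.trans hμε.le)

/-- Proposition 3.4, trajectory lifting: any closed-loop trajectory of the μ-perturbed
system under the refined controller quantizes to a behavior of the controlled
symbolic model. -/
theorem trajectory_lifting
    {n q : ℕ} {ι Ud : Type*} [Fintype ι]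
    (P : ι → Set (EuclideanSpace ℝ (Fin n)))
    (hdisj : Pairwise (Function.onFun Disjoint P))
    (hcover : (⋃ i, P i) = Set.univ)
    (Q : EuclideanSpace ℝ (Fin n) → ι) (hQ : ∀ x, x ∈ P (Q x))
    (D : Set (EuclideanSpace ℝ (Fin q)))
    (f : EuclideanSpace ℝ (Fin n) → Ud → EuclideanSpace ℝ (Fin q) → EuclideanSpace ℝ (Fin n))
    (Fbar : ι → Ud → Set (EuclideanSpace ℝ (Fin n)))
    (hFbar : ∀ i u x d, x ∈ P i → d ∈ D → f x u d ∈ Fbar i u)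
    (Cd : ι → Set Ud)
    (μ : EuclideanSpace ℝ (Fin n) → Ud → ℝ)
    (hμ : ∀ x u, 0 ≤ μ x u ∧ ∃ ε : ℝ, μ x u < ε ∧
      closure (Fbar (Q x) u) + closedBall (0 : EuclideanSpace ℝ (Fin n)) ε ⊆
        interior (conc P (symbSucc P Fbar (Q x) u)))
    (x : ℕ → EuclideanSpace ℝ (Fin n)) (u : ℕ → Ud)
    (hu : ∀ k, u k ∈ Cd (Q (x k)))
    (hx : ∀ k, ∃ d ∈ D, ‖x (k + 1) - f (x k) (u k) d‖ ≤ μ (x k) (u k)) :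
    ∀ k, Q (x (k + 1)) ∈ symbSucc P Fbar (Q (x k)) (u k) :=
  trajectory_lifting_general P hdisj Q hQ D f Fbar hFbar μ hμ x u hx
end

section
/- (Proposition 3.4, specification satisfaction under controller refinement.) Let Cd : ι → Set Ud be a symbolic controller, μ : E → Ud → ℝ a perturbation bound such that for every x ∈ E and input u, 0 ≤ μ x u and there exists ε with μ x u < ε and closure (Fbar (Q x) u) + closedBall 0 ε ⊆ interior (Q⁻¹(Δd(Q x, u))). Let Bspec be a set of symbolic state sequences (Bspec ⊆ Set (ℕ → ι)) such that Cd enforces Bspec on the symbolic model: for all sequences q : ℕ → ι and v : ℕ → Ud, if for every k one has v k ∈ Cd (q k) and q (k+1) ∈ Δd(q k, v k), then q ∈ Bspec. Then for any sequences x : ℕ → E, u : ℕ → Ud satisfying for every k: u k ∈ Cd (Q (x k)) and there exists d ∈ D with ‖x (k+1) − f (x k) (u k) d‖ ≤ μ (x k) (u k), the quantized state sequence (fun k => Q (x k)) belongs to Bspec. That is, the refined controller C(x) = Cd(Q x) is a controller for the μ-perturbed system and the concretized specification. -/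
/-! Since `μ < ε`, each perturbed successor `x (k+1)` lies in
`closure (Fbar (Q (x k)) (u k)) + closedBall 0 ε`, hence in the concretization of
`Δd(Q (x k), u k)`; as the cells are disjoint, its own cell `Q (x (k+1))` is then a symbolic
successor. So the quantized trajectory is a run of the symbolic closed loop, which `Cd` keeps
in `Bspec`. -/

open Metric Set Pointwise

theorem mem_of_add_closedBall_subset_interior {E : Type*} [SeminormedAddCommGroup E]
    {K V : Set E} {ε : ℝ}
    (h : K + closedBall (0 : E) ε ⊆ interior V) {y z : E} (hy : y ∈ K) (hz : ‖z - y‖ ≤ ε) :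
    z ∈ V :=
  interior_subset <| h ⟨y, hy, z - y, mem_closedBall_zero_iff.mpr hz, add_sub_cancel y z⟩

theorem mem_conc_iff_of_pairwise_disjoint {E ι : Type*} {P : ι → Set E}
    (hdisj : Pairwise (Function.onFun Disjoint P)) {A : Set ι} {i : ι} {z : E} (hz : z ∈ P i) :
    z ∈ conc P A ↔ i ∈ A := by
  simp only [conc, mem_iUnion, exists_prop]
  refine ⟨fun ⟨j, hj, hzj⟩ => ?_, fun hi => ⟨i, hi, hz⟩⟩
  obtain rfl : j = i := by
    by_contra hne
    exact (hdisj hne).le_bot ⟨hzj, hz⟩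
  exact hj

theorem mem_symbSucc_of_norm_sub_le {E ι Ud : Type*} [SeminormedAddCommGroup E]
    {P : ι → Set E} (hdisj : Pairwise (Function.onFun Disjoint P))
    {Fbar : ι → Ud → Set E} {i : ι} {u : Ud} {ε : ℝ}
    (hmargin : closure (Fbar i u) + closedBall (0 : E) ε ⊆
      interior (conc P (symbSucc P Fbar i u)))
    {y z : E} {j : ι} (hy : y ∈ Fbar i u) (hz : ‖z - y‖ ≤ ε) (hzj : z ∈ P j) :
    j ∈ symbSucc P Fbar i u :=
  (mem_conc_iff_of_pairwise_disjoint hdisj hzj).mp <|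
    mem_of_add_closedBall_subset_interior hmargin (subset_closure hy) hz

theorem controller_refinement_spec_general
    {n q : ℕ} {ι Ud : Type*}
    (P : ι → Set (EuclideanSpace ℝ (Fin n)))
    (hdisj : Pairwise (Function.onFun Disjoint P))
    (Q : EuclideanSpace ℝ (Fin n) → ι) (hQ : ∀ x, x ∈ P (Q x))
    (D : Set (EuclideanSpace ℝ (Fin q)))
    (f : EuclideanSpace ℝ (Fin n) → Ud → EuclideanSpace ℝ (Fin q) → EuclideanSpace ℝ (Fin n))
    (Fbar : ι → Ud → Set (EuclideanSpace ℝ (Fin n)))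
    (hFbar : ∀ i u x d, x ∈ P i → d ∈ D → f x u d ∈ Fbar i u)
    (Cd : ι → Set Ud)
    (μ : EuclideanSpace ℝ (Fin n) → Ud → ℝ)
    (hμ : ∀ x u, 0 ≤ μ x u ∧ ∃ ε : ℝ, μ x u < ε ∧
      closure (Fbar (Q x) u) + closedBall (0 : EuclideanSpace ℝ (Fin n)) ε ⊆
        interior (conc P (symbSucc P Fbar (Q x) u)))
    (Bspec : Set (ℕ → ι))
    (hCd : ∀ (qs : ℕ → ι) (v : ℕ → Ud),
      (∀ k, v k ∈ Cd (qs k) ∧ qs (k + 1) ∈ symbSucc P Fbar (qs k) (v k)) → qs ∈ Bspec)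
    (x : ℕ → EuclideanSpace ℝ (Fin n)) (u : ℕ → Ud)
    (hu : ∀ k, u k ∈ Cd (Q (x k)))
    (hx : ∀ k, ∃ d ∈ D, ‖x (k + 1) - f (x k) (u k) d‖ ≤ μ (x k) (u k)) :
    (fun k => Q (x k)) ∈ Bspec := by
  refine hCd _ u fun k => ⟨hu k, ?_⟩
  obtain ⟨d, hd, hnorm⟩ := hx k
  obtain ⟨-, ε, hμε, hmargin⟩ := hμ (x k) (u k)
  exact mem_symbSucc_of_norm_sub_le hdisj hmargin (hFbar _ _ _ _ (hQ (x k)) hd)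
    (hnorm.trans hμε.le) (hQ (x (k + 1)))

/-- Proposition 3.4: if the symbolic controller enforces the specification on the
symbolic model, the refined controller enforces the concretized specification on the
μ-perturbed system. -/
theorem controller_refinement_spec
    {n q : ℕ} {ι Ud : Type*} [Fintype ι]
    (P : ι → Set (EuclideanSpace ℝ (Fin n)))
    (hdisj : Pairwise (Function.onFun Disjoint P))
    (hcover : (⋃ i, P i) = Set.univ)
    (Q : EuclideanSpace ℝ (Fin n) → ι) (hQ : ∀ x, x ∈ P (Q x))
    (D : Set (EuclideanSpace ℝ (Fin q)))
    (f : EuclideanSpace ℝ (Fin n) → Ud → EuclideanSpace ℝ (Fin q) → EuclideanSpace ℝ (Fin n))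
    (Fbar : ι → Ud → Set (EuclideanSpace ℝ (Fin n)))
    (hFbar : ∀ i u x d, x ∈ P i → d ∈ D → f x u d ∈ Fbar i u)
    (Cd : ι → Set Ud)
    (μ : EuclideanSpace ℝ (Fin n) → Ud → ℝ)
    (hμ : ∀ x u, 0 ≤ μ x u ∧ ∃ ε : ℝ, μ x u < ε ∧
      closure (Fbar (Q x) u) + closedBall (0 : EuclideanSpace ℝ (Fin n)) ε ⊆
        interior (conc P (symbSucc P Fbar (Q x) u)))
    (Bspec : Set (ℕ → ι))
    (hCd : ∀ (qs : ℕ → ι) (v : ℕ → Ud),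
      (∀ k, v k ∈ Cd (qs k) ∧ qs (k + 1) ∈ symbSucc P Fbar (qs k) (v k)) → qs ∈ Bspec)
    (x : ℕ → EuclideanSpace ℝ (Fin n)) (u : ℕ → Ud)
    (hu : ∀ k, u k ∈ Cd (Q (x k)))
    (hx : ∀ k, ∃ d ∈ D, ‖x (k + 1) - f (x k) (u k) d‖ ≤ μ (x k) (u k)) :
    (fun k => Q (x k)) ∈ Bspec :=
  controller_refinement_spec_general P hdisj Q hQ D f Fbar hFbar Cd μ hμ Bspec hCd x u hu hx
end

section
/- (Escape above the robustness margin.) Let E be a real normed vector space, K ⊆ E a nonempty set and V ⊆ E any set. Define S = {ε : 0 ≤ ε ∧ K + closedBall 0 ε ⊆ interior V}, and assume S is nonempty and bounded above. Then for every ε₀ > sSup S, the thickened set K + closedBall 0 ε₀ meets the complement of V: (K + closedBall 0 ε₀) ∩ Vᶜ ≠ ∅. -/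
open Metric Set Pointwise

section

variable {E : Type*} [SeminormedAddCommGroup E]

theorem closedBall_subset_add_closedBall_zero_s10 {K : Set E} {x : E} {ε δ : ℝ}
    (hx : x ∈ K + closedBall (0 : E) ε) : closedBall x δ ⊆ K + closedBall (0 : E) (ε + δ) := by
  obtain ⟨k, hk, b, hb, rfl⟩ := hx
  intro y hy
  refine mem_add.mpr ⟨k, hk, b + (y - (k + b)), ?_, by rw [← add_assoc, add_sub_cancel]⟩
  rw [mem_closedBall_zero_iff] at hb ⊢
  rw [mem_closedBall, dist_eq_norm] at hy
  calc ‖b + (y - (k + b))‖ ≤ ‖b‖ + ‖y - (k + b)‖ := norm_add_le _ _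
    _ ≤ ε + δ := add_le_add hb hy

/-- The closed ball of radius `ε₀ - ε` around a point of `K + closedBall 0 ε` outside
`interior V` lies in `K + closedBall 0 ε₀` and, being a neighbourhood of that point, is not
contained in `V`. -/
theorem inter_compl_nonempty_of_add_closedBall_not_subset_interior {K V : Set E} {ε ε₀ : ℝ}
    (hε : ¬K + closedBall (0 : E) ε ⊆ interior V) (hεε₀ : ε < ε₀) :
    ((K + closedBall (0 : E) ε₀) ∩ Vᶜ).Nonempty := by
  obtain ⟨x, hxK, hxV⟩ := not_subset.mp hε
  have hball : closedBall x (ε₀ - ε) ∈ nhds x := closedBall_mem_nhds x (sub_pos.mpr hεε₀)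
  obtain ⟨y, hy, hyV⟩ := not_subset.mp fun h => hxV (mem_interior_iff_mem_nhds.mpr
    (Filter.mem_of_superset hball h))
  have hsub := closedBall_subset_add_closedBall_zero_s10 (δ := ε₀ - ε) hxK
  rw [add_sub_cancel] at hsub
  exact ⟨y, hsub hy, hyV⟩

end

theorem escape_above_margin_general
    {E : Type*} [NormedAddCommGroup E]
    (K V : Set E)
    (hbdd : BddAbove {ε : ℝ | 0 ≤ ε ∧ K + closedBall (0 : E) ε ⊆ interior V}) :
    ∀ ε₀ : ℝ, sSup {ε : ℝ | 0 ≤ ε ∧ K + closedBall (0 : E) ε ⊆ interior V} < ε₀ →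
      ((K + closedBall (0 : E) ε₀) ∩ Vᶜ).Nonempty := by
  intro ε₀ hε₀
  obtain ⟨ε, hSε, hεε₀⟩ := exists_between hε₀
  have hε : 0 ≤ ε := (Real.sSup_nonneg fun _ h => h.1).trans hSε.le
  exact inter_compl_nonempty_of_add_closedBall_not_subset_interior
    (fun hsub => notMem_of_csSup_lt hSε hbdd ⟨hε, hsub⟩) hεε₀

/-- Escape above the robustness margin: strictly beyond the supremal admissible margin,
the thickened set meets the complement of `V` itself. -/
theorem escape_above_margin
    {E : Type*} [NormedAddCommGroup E] [NormedSpace ℝ E]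
    (K V : Set E) (hK : K.Nonempty)
    (hS : {ε : ℝ | 0 ≤ ε ∧ K + closedBall (0 : E) ε ⊆ interior V}.Nonempty)
    (hbdd : BddAbove {ε : ℝ | 0 ≤ ε ∧ K + closedBall (0 : E) ε ⊆ interior V}) :
    ∀ ε₀ : ℝ, sSup {ε : ℝ | 0 ≤ ε ∧ K + closedBall (0 : E) ε ⊆ interior V} < ε₀ →
      ((K + closedBall (0 : E) ε₀) ∩ Vᶜ).Nonempty :=
  escape_above_margin_general K V hbdd
end
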